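/- Let C be a 3×3 unitary matrix with entries a^{(i,j)} and λ ∈ ℝ with e^{iλ} ≠ a^{(2,2)}. Then A(λ) = 0 if and only if D(λ) = 0. -/

import Mathlib

open Complex Matrix ComplexConjugate

noncomputable section

/-- `A(λ)` for a 3×3 coin matrix `M`. -/
def coefA (M : Matrix (Fin 3) (Fin 3) ℂ) (lam : ℝ) : ℂ :=
  M 0 0 + M 0 1 * M 1 0 / (Complex.exp (lam * Complex.I) - M 1 1)

/-- `D(λ)` for a 3×3 coin matrix `M`. -/
def coefD (M : Matrix (Fin 3) (Fin 3) ℂ) (lam : ℝ) : ℂ :=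
  M 2 2 + M 2 1 * M 1 2 / (Complex.exp (lam * Complex.I) - M 1 1)

/-!
Write `z = e^{iλ}` and `d = det C`. Clearing the denominator, `A(λ) = 0` says
`a^{(1,1)} z = a^{(1,1)} a^{(2,2)} - a^{(1,2)} a^{(2,1)}`, and the right side is the cofactor of
`a^{(3,3)}`; since `adj C = d C*` for unitary `C`, this reads `a^{(1,1)} z = d conj a^{(3,3)}`.
Likewise `D(λ) = 0` reads `a^{(3,3)} z = d conj a^{(1,1)}`. Because `|z| = |d| = 1`, conjugating
either equation and multiplying by `d z` gives the other.
-/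

theorem Matrix.adjugate_eq_det_smul_star_of_mem_unitaryGroup {n α : Type*} [DecidableEq n]
    [Fintype n] [CommRing α] [StarRing α] {U : Matrix n n α} (hU : U ∈ unitaryGroup n α) :
    adjugate U = U.det • star U :=
  calc adjugate U = star U * U * adjugate U := by rw [Unitary.star_mul_self_of_mem hU, one_mul]
    _ = U.det • star U := by rw [mul_assoc, mul_adjugate, Matrix.mul_smul, mul_one]

theorem Matrix.adjugate_apply_of_mem_unitaryGroup {n α : Type*} [DecidableEq n] [Fintype n]
    [CommRing α] [StarRing α] {U : Matrix n n α} (hU : U ∈ unitaryGroup n α) (i j : n) :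
    adjugate U i j = U.det * star (U j i) := by
  rw [adjugate_eq_det_smul_star_of_mem_unitaryGroup hU, smul_apply, smul_eq_mul, star_apply]

theorem mul_eq_mul_star_symm {R : Type*} [CommRing R] [StarRing R] {z d : R}
    (hz : z ∈ unitary R) (hd : d ∈ unitary R) {a b : R} (h : a * z = d * star b) :
    b * z = d * star a := by
  have h' : star a * star z = star d * b := by simpa using congrArg star h
  linear_combination (-(d * z)) * h' + (d * star a) * Unitary.mul_star_self_of_mem hz
    - (b * z) * Unitary.mul_star_self_of_mem hd

theorem Complex.exp_ofReal_mul_I_mem_unitary (x : ℝ) : exp (x * I) ∈ unitary ℂ := by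
  have h : star (exp (x * I)) * exp (x * I) = 1 := by
    rw [star_def, ← exp_conj, ← exp_add]
    simp
  exact Unitary.mem_iff.mpr ⟨h, by rwa [mul_comm]⟩

theorem add_div_sub_eq_zero_iff {K : Type*} [Field K] {a b z c : K} (h : z ≠ c) :
    a + b / (z - c) = 0 ↔ a * z = a * c - b := by
  have hzc : z - c ≠ 0 := sub_ne_zero.mpr h
  rw [add_div' _ _ _ hzc, div_eq_zero_iff, or_iff_left hzc, ← sub_eq_zero, ← sub_eq_zero (a := a * z)]
  ring_nf

/-- for a 3×3 unitary coin `M` and `λ ∈ ℝ` with `e^{iλ} ≠ a^{(2,2)}`,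
`A(λ) = 0` iff `D(λ) = 0`. -/
theorem coefA_eq_zero_iff_coefD_eq_zero (M : Matrix (Fin 3) (Fin 3) ℂ)
    (hM : M ∈ Matrix.unitaryGroup (Fin 3) ℂ) (lam : ℝ)
    (hne : Complex.exp (lam * Complex.I) ≠ M 1 1) :
    coefA M lam = 0 ↔ coefD M lam = 0 := by
  have hA : coefA M lam = 0 ↔ M 0 0 * exp (lam * I) = M.det * star (M 2 2) := by
    rw [coefA, add_div_sub_eq_zero_iff hne, ← adjugate_apply_of_mem_unitaryGroup hM,
      adjugate_fin_three]
    simp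
  have hD : coefD M lam = 0 ↔ M 2 2 * exp (lam * I) = M.det * star (M 0 0) := by
    rw [coefD, add_div_sub_eq_zero_iff hne, ← adjugate_apply_of_mem_unitaryGroup hM,
      adjugate_fin_three]
    simp [mul_comm]
  have hz := exp_ofReal_mul_I_mem_unitary lam
  have hd := det_of_mem_unitary hM
  rw [hA, hD]
  exact ⟨mul_eq_mul_star_symm hz hd, mul_eq_mul_star_symm hz hd⟩
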